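/- arXiv:2507.06279 — 5 statements merged into one kernel-verified Lean document; each statement's English description precedes it below -/
import Mathlib

section
/- Let $N \geq 4$ and let $v_{\mu}^{ab}$ (for $1 \le \mu \le N-1$, $1 \le a < b \le N$) be the components, in a basis where $e_\mu^a = \delta_\mu^a$, of an element $v \in \Omega^1(\Sigma, \wedge^2 \mathcal{V})$ satisfying $e \wedge v = 0$ (i.e. $\sum_{\mu} e_{[\mu}^{[a} v_{\nu]}^{bc]} = 0$ after antisymmetrization over form and internal indices). Then: (i) $v_i^{Nj} = 0$ for all $1 \le i, j \le N-1$ with $i \neq j$; (ii) $\sum_{i \neq N, i \neq j} v_i^{iN} = 0$ for all $1 \le j \le N-1$; (iii) $\sum_{i \neq N, i \neq j} v_i^{ij} = 0$ for all $1 \le j \le N-1$. -/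
/-- Kronecker delta (real-valued), used for the coframe components `e_μ^a = δ_μ^a`. -/
def kron (i j : ℕ) : ℝ := if i = j then 1 else 0

lemma kron_self (i : ℕ) : kron i i = 1 := if_pos rfl

lemma kron_ne {i j : ℕ} (h : i ≠ j) : kron i j = 0 := if_neg h

lemma aux_sum (S : Finset ℕ) (g : ℕ → ℝ) (k k' : ℕ) (hk : k ∈ S) (hk' : k' ∈ S)
    (hne : k ≠ k') (h : ∀ i ∈ S, ∀ j ∈ S, i ≠ j → g i = -g j) :
    ∑ i ∈ S, g i = 0 := by
  have rep : ∀ m ∈ S, ∑ i ∈ S, g i = -((S.card - 1 : ℕ) * g m) + g m := by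
    intro m hm
    rw [← Finset.sum_erase_add S g hm]
    congr 1
    rw [Finset.sum_congr rfl (fun i hi => h i (Finset.mem_of_mem_erase hi) m hm
      (Finset.ne_of_mem_erase hi))]
    rw [Finset.sum_const, Finset.card_erase_of_mem hm, nsmul_eq_mul, mul_neg]
  have e1 := rep k hk
  have e2 := rep k' hk'
  have hgg : g k = -g k' := h k hk k' hk' hne
  rw [hgg] at e1
  simp only [mul_neg, neg_neg] at e1
  linarith

/-- Lemma (components of `v` with `e ∧ v = 0`): if the totally antisymmetrized
combination `δ_{[μ}^{[a} v_{ν]}^{bc]}` vanishes for all form indices `μ, ν ∈ {1,…,N-1}`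
and internal indices `a, b, c ∈ {1,…,N}`, then
(i) `v_i^{Nj} = 0` for `i ≠ j`;
(ii) `∑_{i ≠ N, i ≠ j} v_i^{iN} = 0`;
(iii) `∑_{i ≠ N, i ≠ j} v_i^{ij} = 0`. -/
theorem stmt0 (N : ℕ) (hN : 4 ≤ N) (v : ℕ → ℕ → ℕ → ℝ)
    (hanti : ∀ μ a b, v μ a b = - v μ b a)
    (hwedge : ∀ μ ∈ Finset.Icc 1 (N - 1), ∀ ν ∈ Finset.Icc 1 (N - 1),
      ∀ a ∈ Finset.Icc 1 N, ∀ b ∈ Finset.Icc 1 N, ∀ c ∈ Finset.Icc 1 N,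
      (kron μ a * v ν b c - kron μ b * v ν a c + kron μ c * v ν a b)
        - (kron ν a * v μ b c - kron ν b * v μ a c + kron ν c * v μ a b) = 0) :
    (∀ i ∈ Finset.Icc 1 (N - 1), ∀ j ∈ Finset.Icc 1 (N - 1), i ≠ j → v i N j = 0) ∧
    (∀ j ∈ Finset.Icc 1 (N - 1), ∑ i ∈ (Finset.Icc 1 (N - 1)).erase j, v i i N = 0) ∧
    (∀ j ∈ Finset.Icc 1 (N - 1), ∑ i ∈ (Finset.Icc 1 (N - 1)).erase j, v i i j = 0) := by
  set S := Finset.Icc 1 (N - 1) with hS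
  have hsub : S ⊆ Finset.Icc 1 N := by
    apply Finset.Icc_subset_Icc_right; omega
  have hneN : ∀ i ∈ S, i ≠ N := by
    intro i hi
    rw [hS, Finset.mem_Icc] at hi
    omega
  have hNmem : N ∈ Finset.Icc 1 N := by
    rw [Finset.mem_Icc]; omega
  have hcard : S.card = N - 1 := by rw [hS, Nat.card_Icc]; omega
  refine ⟨?_, ?_, ?_⟩
  · -- part (i)
    intro i hi j hj hij
    -- find a third index k
    have hk : ((S.erase i).erase j).Nonempty := by
      rw [← Finset.card_pos]
      have h1 : S.card - 1 ≤ (S.erase i).card := Finset.pred_card_le_card_erase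
      have h2 : (S.erase i).card - 1 ≤ ((S.erase i).erase j).card :=
        Finset.pred_card_le_card_erase
      omega
    obtain ⟨k, hk⟩ := hk
    have hkj : k ≠ j := Finset.ne_of_mem_erase hk
    have hki : k ≠ i := Finset.ne_of_mem_erase (Finset.mem_of_mem_erase hk)
    have hkS : k ∈ S := Finset.mem_of_mem_erase (Finset.mem_of_mem_erase hk)
    have key := hwedge k hkS i hi k (hsub hkS) N hNmem j (hsub hj)
    rw [kron_self, kron_ne (hneN k hkS), kron_ne hkj, kron_ne hki.symm,
      kron_ne (hneN i hi), kron_ne hij] at key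
    linarith
  · -- part (ii)
    intro j hj
    have hrel : ∀ i ∈ S.erase j, ∀ m ∈ S.erase j, i ≠ m → v i i N = -(v m m N) := by
      intro i hi m hm him
      have hiS := Finset.mem_of_mem_erase hi
      have hmS := Finset.mem_of_mem_erase hm
      have key := hwedge i hiS m hmS i (hsub hiS) N hNmem m (hsub hmS)
      rw [kron_self, kron_self, kron_ne (hneN i hiS), kron_ne him, kron_ne him.symm,
        kron_ne (hneN m hmS)] at key
      have := hanti m N m
      linarith
    have h2 : 1 < (S.erase j).card := by
      rw [Finset.card_erase_of_mem hj]; omega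
    obtain ⟨k, hk, k', hk', hkk'⟩ := Finset.one_lt_card.mp h2
    exact aux_sum _ _ k k' hk hk' hkk' hrel
  · -- part (iii)
    intro j hj
    have hrel : ∀ i ∈ S.erase j, ∀ m ∈ S.erase j, i ≠ m → v i i j = -(v m m j) := by
      intro i hi m hm him
      have hiS := Finset.mem_of_mem_erase hi
      have hmS := Finset.mem_of_mem_erase hm
      have hij : i ≠ j := Finset.ne_of_mem_erase hi
      have hmj : m ≠ j := Finset.ne_of_mem_erase hm
      have key := hwedge i hiS m hmS i (hsub hiS) j (hsub hj) m (hsub hmS)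
      rw [kron_self, kron_self, kron_ne hij, kron_ne him, kron_ne him.symm,
        kron_ne hmj] at key
      have := hanti m j m
      linarith
    have h2 : 1 < (S.erase j).card := by
      rw [Finset.card_erase_of_mem hj]; omega
    obtain ⟨k, hk, k', hk', hkk'⟩ := Finset.one_lt_card.mp h2
    exact aux_sum _ _ k k' hk hk' hkk' hrel
end

section
/- Let $N = 4$ and let $V \subset \mathbb{R}^{3} \otimes \wedge^2 \mathbb{R}^4$ be the 6-dimensional space of elements $v = (v_\mu^{ab})$ satisfying the linear constraints $v_i^{4j} = 0$ for $i \neq j$ ($1 \le i,j \le 3$), $\sum_{i \neq 4, i \neq j} v_i^{i4} = 0$, and $\sum_{i \neq 4, i \neq j} v_i^{ij} = 0$ for each $j \in \{1,2,3\}$. Then the quadratic form $Q(v) = \sum_{c \neq d, e} (v_c^{ce} v_d^{de} - v_d^{ce} v_c^{de}) \eta_{ee}$ with $\eta = \mathrm{diag}(1,1,1)$ (Euclidean signature on the first three indices) is nondegenerate on $V$. -/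
/-- The linear constraints cutting out the 6-dimensional space `V` of components
`v_μ^{ab}` (`1 ≤ μ ≤ 3`, `1 ≤ a, b ≤ 4`, antisymmetric in `a, b`) of an element
`v ∈ Ω¹(Σ, ∧²𝒱)` with `e ∧ v = 0` in dimension `N = 4`:
`v_i^{4j} = 0` for `i ≠ j`, `∑_{i≠4, i≠j} v_i^{i4} = 0`, and
`∑_{i≠4, i≠j} v_i^{ij} = 0` for each `j ∈ {1,2,3}`. -/
def ConstraintsPC4 (v : ℕ → ℕ → ℕ → ℝ) : Prop :=
  (∀ μ ∈ Finset.Icc 1 3, ∀ a ∈ Finset.Icc 1 4, ∀ b ∈ Finset.Icc 1 4,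
    v μ a b = - v μ b a) ∧
  (∀ i ∈ Finset.Icc 1 3, ∀ j ∈ Finset.Icc 1 3, i ≠ j → v i 4 j = 0) ∧
  (∀ j ∈ Finset.Icc 1 3, ∑ i ∈ (Finset.Icc 1 3).erase j, v i i 4 = 0) ∧
  (∀ j ∈ Finset.Icc 1 3, ∑ i ∈ (Finset.Icc 1 3).erase j, v i i j = 0)

/-- The quadratic form `Q(v) = ∑ (v_c^{ce} v_d^{de} - v_d^{ce} v_c^{de}) η_{ee}` with
`η = diag(1,1,1)` (Euclidean signature), the sum running over distinct
`c, d, e ∈ {1,2,3}`. -/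
def QPC4 (v : ℕ → ℕ → ℕ → ℝ) : ℝ :=
  ∑ c ∈ Finset.Icc 1 3, ∑ d ∈ (Finset.Icc 1 3).erase c,
    ∑ e ∈ ((Finset.Icc 1 3).erase c).erase d,
      (v c c e * v d d e - v d c e * v c d e)

/-- Basis building block: `1` at `(μ0,a0,b0)`, `-1` at `(μ0,b0,a0)`, `0` elsewhere. -/
def Wb (μ0 a0 b0 : ℕ) : ℕ → ℕ → ℕ → ℝ := fun μ a b =>
  if μ = μ0 ∧ a = a0 ∧ b = b0 then 1 else if μ = μ0 ∧ a = b0 ∧ b = a0 then -1 else 0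

lemma QPC4_expand (u : ℕ → ℕ → ℕ → ℝ) : QPC4 u =
    2*((u 1 1 3 * u 2 2 3 - u 2 1 3 * u 1 2 3) + (u 1 1 2 * u 3 3 2 - u 3 1 2 * u 1 3 2)
      + (u 2 2 1 * u 3 3 1 - u 3 2 1 * u 2 3 1)) := by
  simp [QPC4, Finset.sum_insert, Finset.mem_insert, Finset.mem_singleton,
    Finset.sum_singleton, Finset.erase_insert_of_ne, Finset.erase_insert,
    show (Finset.Icc 1 3 : Finset ℕ) = {1,2,3} from rfl]
  ring

def W1 : ℕ → ℕ → ℕ → ℝ := fun μ a b => Wb 1 2 3 μ a b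

lemma hW1 : ConstraintsPC4 W1 := by
  refine ⟨?_, ?_, ?_, ?_⟩
  · intro μ hμ a ha b hb
    obtain ⟨hm1, hm2⟩ := Finset.mem_Icc.mp hμ
    obtain ⟨ha1, ha2⟩ := Finset.mem_Icc.mp ha
    obtain ⟨hb1, hb2⟩ := Finset.mem_Icc.mp hb
    interval_cases μ <;> interval_cases a <;> interval_cases b <;> norm_num [W1, Wb]
  · intro i hi j hj hij
    obtain ⟨hi1, hi2⟩ := Finset.mem_Icc.mp hi
    obtain ⟨hj1, hj2⟩ := Finset.mem_Icc.mp hj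
    interval_cases i <;> interval_cases j <;> norm_num [W1, Wb] <;> decide
  · intro j hj
    obtain ⟨hj1, hj2⟩ := Finset.mem_Icc.mp hj
    interval_cases j <;>
      norm_num [show ((Finset.Icc 1 3:Finset ℕ).erase 1) = {2,3} from rfl,
        show ((Finset.Icc 1 3:Finset ℕ).erase 2) = {1,3} from rfl,
        show ((Finset.Icc 1 3:Finset ℕ).erase 3) = {1,2} from rfl, W1, Wb] <;> decide
  · intro j hj
    obtain ⟨hj1, hj2⟩ := Finset.mem_Icc.mp hj
    interval_cases j <;>
      norm_num [show ((Finset.Icc 1 3:Finset ℕ).erase 1) = {2,3} from rfl,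
        show ((Finset.Icc 1 3:Finset ℕ).erase 2) = {1,3} from rfl,
        show ((Finset.Icc 1 3:Finset ℕ).erase 3) = {1,2} from rfl, W1, Wb] <;> decide

def W2 : ℕ → ℕ → ℕ → ℝ := fun μ a b => Wb 2 1 3 μ a b

lemma hW2 : ConstraintsPC4 W2 := by
  refine ⟨?_, ?_, ?_, ?_⟩
  · intro μ hμ a ha b hb
    obtain ⟨hm1, hm2⟩ := Finset.mem_Icc.mp hμ
    obtain ⟨ha1, ha2⟩ := Finset.mem_Icc.mp ha
    obtain ⟨hb1, hb2⟩ := Finset.mem_Icc.mp hb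
    interval_cases μ <;> interval_cases a <;> interval_cases b <;> norm_num [W2, Wb]
  · intro i hi j hj hij
    obtain ⟨hi1, hi2⟩ := Finset.mem_Icc.mp hi
    obtain ⟨hj1, hj2⟩ := Finset.mem_Icc.mp hj
    interval_cases i <;> interval_cases j <;> norm_num [W2, Wb] <;> decide
  · intro j hj
    obtain ⟨hj1, hj2⟩ := Finset.mem_Icc.mp hj
    interval_cases j <;>
      norm_num [show ((Finset.Icc 1 3:Finset ℕ).erase 1) = {2,3} from rfl,
        show ((Finset.Icc 1 3:Finset ℕ).erase 2) = {1,3} from rfl,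
        show ((Finset.Icc 1 3:Finset ℕ).erase 3) = {1,2} from rfl, W2, Wb] <;> decide
  · intro j hj
    obtain ⟨hj1, hj2⟩ := Finset.mem_Icc.mp hj
    interval_cases j <;>
      norm_num [show ((Finset.Icc 1 3:Finset ℕ).erase 1) = {2,3} from rfl,
        show ((Finset.Icc 1 3:Finset ℕ).erase 2) = {1,3} from rfl,
        show ((Finset.Icc 1 3:Finset ℕ).erase 3) = {1,2} from rfl, W2, Wb] <;> decide

def W3 : ℕ → ℕ → ℕ → ℝ := fun μ a b => Wb 3 1 2 μ a b

lemma hW3 : ConstraintsPC4 W3 := by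
  refine ⟨?_, ?_, ?_, ?_⟩
  · intro μ hμ a ha b hb
    obtain ⟨hm1, hm2⟩ := Finset.mem_Icc.mp hμ
    obtain ⟨ha1, ha2⟩ := Finset.mem_Icc.mp ha
    obtain ⟨hb1, hb2⟩ := Finset.mem_Icc.mp hb
    interval_cases μ <;> interval_cases a <;> interval_cases b <;> norm_num [W3, Wb]
  · intro i hi j hj hij
    obtain ⟨hi1, hi2⟩ := Finset.mem_Icc.mp hi
    obtain ⟨hj1, hj2⟩ := Finset.mem_Icc.mp hj
    interval_cases i <;> interval_cases j <;> norm_num [W3, Wb] <;> decide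
  · intro j hj
    obtain ⟨hj1, hj2⟩ := Finset.mem_Icc.mp hj
    interval_cases j <;>
      norm_num [show ((Finset.Icc 1 3:Finset ℕ).erase 1) = {2,3} from rfl,
        show ((Finset.Icc 1 3:Finset ℕ).erase 2) = {1,3} from rfl,
        show ((Finset.Icc 1 3:Finset ℕ).erase 3) = {1,2} from rfl, W3, Wb] <;> decide
  · intro j hj
    obtain ⟨hj1, hj2⟩ := Finset.mem_Icc.mp hj
    interval_cases j <;>
      norm_num [show ((Finset.Icc 1 3:Finset ℕ).erase 1) = {2,3} from rfl,
        show ((Finset.Icc 1 3:Finset ℕ).erase 2) = {1,3} from rfl,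
        show ((Finset.Icc 1 3:Finset ℕ).erase 3) = {1,2} from rfl, W3, Wb] <;> decide

def Wp : ℕ → ℕ → ℕ → ℝ := fun μ a b => Wb 1 1 2 μ a b - Wb 3 3 2 μ a b

lemma hWp : ConstraintsPC4 Wp := by
  refine ⟨?_, ?_, ?_, ?_⟩
  · intro μ hμ a ha b hb
    obtain ⟨hm1, hm2⟩ := Finset.mem_Icc.mp hμ
    obtain ⟨ha1, ha2⟩ := Finset.mem_Icc.mp ha
    obtain ⟨hb1, hb2⟩ := Finset.mem_Icc.mp hb
    interval_cases μ <;> interval_cases a <;> interval_cases b <;> norm_num [Wp, Wb]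
  · intro i hi j hj hij
    obtain ⟨hi1, hi2⟩ := Finset.mem_Icc.mp hi
    obtain ⟨hj1, hj2⟩ := Finset.mem_Icc.mp hj
    interval_cases i <;> interval_cases j <;> norm_num [Wp, Wb] <;> decide
  · intro j hj
    obtain ⟨hj1, hj2⟩ := Finset.mem_Icc.mp hj
    interval_cases j <;>
      norm_num [show ((Finset.Icc 1 3:Finset ℕ).erase 1) = {2,3} from rfl,
        show ((Finset.Icc 1 3:Finset ℕ).erase 2) = {1,3} from rfl,
        show ((Finset.Icc 1 3:Finset ℕ).erase 3) = {1,2} from rfl, Wp, Wb] <;> decide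
  · intro j hj
    obtain ⟨hj1, hj2⟩ := Finset.mem_Icc.mp hj
    interval_cases j <;>
      norm_num [show ((Finset.Icc 1 3:Finset ℕ).erase 1) = {2,3} from rfl,
        show ((Finset.Icc 1 3:Finset ℕ).erase 2) = {1,3} from rfl,
        show ((Finset.Icc 1 3:Finset ℕ).erase 3) = {1,2} from rfl, Wp, Wb] <;> decide

def Wq : ℕ → ℕ → ℕ → ℝ := fun μ a b => Wb 1 1 3 μ a b - Wb 2 2 3 μ a b

lemma hWq : ConstraintsPC4 Wq := by
  refine ⟨?_, ?_, ?_, ?_⟩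
  · intro μ hμ a ha b hb
    obtain ⟨hm1, hm2⟩ := Finset.mem_Icc.mp hμ
    obtain ⟨ha1, ha2⟩ := Finset.mem_Icc.mp ha
    obtain ⟨hb1, hb2⟩ := Finset.mem_Icc.mp hb
    interval_cases μ <;> interval_cases a <;> interval_cases b <;> norm_num [Wq, Wb]
  · intro i hi j hj hij
    obtain ⟨hi1, hi2⟩ := Finset.mem_Icc.mp hi
    obtain ⟨hj1, hj2⟩ := Finset.mem_Icc.mp hj
    interval_cases i <;> interval_cases j <;> norm_num [Wq, Wb] <;> decide
  · intro j hj
    obtain ⟨hj1, hj2⟩ := Finset.mem_Icc.mp hj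
    interval_cases j <;>
      norm_num [show ((Finset.Icc 1 3:Finset ℕ).erase 1) = {2,3} from rfl,
        show ((Finset.Icc 1 3:Finset ℕ).erase 2) = {1,3} from rfl,
        show ((Finset.Icc 1 3:Finset ℕ).erase 3) = {1,2} from rfl, Wq, Wb] <;> decide
  · intro j hj
    obtain ⟨hj1, hj2⟩ := Finset.mem_Icc.mp hj
    interval_cases j <;>
      norm_num [show ((Finset.Icc 1 3:Finset ℕ).erase 1) = {2,3} from rfl,
        show ((Finset.Icc 1 3:Finset ℕ).erase 2) = {1,3} from rfl,
        show ((Finset.Icc 1 3:Finset ℕ).erase 3) = {1,2} from rfl, Wq, Wb] <;> decide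

def Wr : ℕ → ℕ → ℕ → ℝ := fun μ a b => Wb 2 2 1 μ a b - Wb 3 3 1 μ a b

lemma hWr : ConstraintsPC4 Wr := by
  refine ⟨?_, ?_, ?_, ?_⟩
  · intro μ hμ a ha b hb
    obtain ⟨hm1, hm2⟩ := Finset.mem_Icc.mp hμ
    obtain ⟨ha1, ha2⟩ := Finset.mem_Icc.mp ha
    obtain ⟨hb1, hb2⟩ := Finset.mem_Icc.mp hb
    interval_cases μ <;> interval_cases a <;> interval_cases b <;> norm_num [Wr, Wb]
  · intro i hi j hj hij
    obtain ⟨hi1, hi2⟩ := Finset.mem_Icc.mp hi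
    obtain ⟨hj1, hj2⟩ := Finset.mem_Icc.mp hj
    interval_cases i <;> interval_cases j <;> norm_num [Wr, Wb] <;> decide
  · intro j hj
    obtain ⟨hj1, hj2⟩ := Finset.mem_Icc.mp hj
    interval_cases j <;>
      norm_num [show ((Finset.Icc 1 3:Finset ℕ).erase 1) = {2,3} from rfl,
        show ((Finset.Icc 1 3:Finset ℕ).erase 2) = {1,3} from rfl,
        show ((Finset.Icc 1 3:Finset ℕ).erase 3) = {1,2} from rfl, Wr, Wb] <;> decide
  · intro j hj
    obtain ⟨hj1, hj2⟩ := Finset.mem_Icc.mp hj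
    interval_cases j <;>
      norm_num [show ((Finset.Icc 1 3:Finset ℕ).erase 1) = {2,3} from rfl,
        show ((Finset.Icc 1 3:Finset ℕ).erase 2) = {1,3} from rfl,
        show ((Finset.Icc 1 3:Finset ℕ).erase 3) = {1,2} from rfl, Wr, Wb] <;> decide

set_option maxHeartbeats 1600000 in
/-- The quadratic form `QPC4` is nondegenerate on the constraint space: if `v` satisfies
the constraints and its polarization against every constrained `w` vanishes, then all
components of `v` (in the index ranges) vanish. -/
theorem stmt7 (v : ℕ → ℕ → ℕ → ℝ) (hv : ConstraintsPC4 v)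
    (hdeg : ∀ w : ℕ → ℕ → ℕ → ℝ, ConstraintsPC4 w →
      QPC4 (fun μ a b => v μ a b + w μ a b) - QPC4 v - QPC4 w = 0) :
    ∀ μ ∈ Finset.Icc 1 3, ∀ a ∈ Finset.Icc 1 4, ∀ b ∈ Finset.Icc 1 4,
      v μ a b = 0 := by
  obtain ⟨hA, h4, hs4, hsj⟩ := hv
  -- sum constraints
  have e1 : v 2 2 1 + v 3 3 1 = 0 := by
    simpa [show ((Finset.Icc 1 3:Finset ℕ).erase 1) = {2,3} from rfl] using hsj 1 (by decide)
  have e2 : v 1 1 2 + v 3 3 2 = 0 := by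
    simpa [show ((Finset.Icc 1 3:Finset ℕ).erase 2) = {1,3} from rfl] using hsj 2 (by decide)
  have e3 : v 1 1 3 + v 2 2 3 = 0 := by
    simpa [show ((Finset.Icc 1 3:Finset ℕ).erase 3) = {1,2} from rfl] using hsj 3 (by decide)
  have f1 : v 2 2 4 + v 3 3 4 = 0 := by
    simpa [show ((Finset.Icc 1 3:Finset ℕ).erase 1) = {2,3} from rfl] using hs4 1 (by decide)
  have f2 : v 1 1 4 + v 3 3 4 = 0 := by
    simpa [show ((Finset.Icc 1 3:Finset ℕ).erase 2) = {1,3} from rfl] using hs4 2 (by decide)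
  have f3 : v 1 1 4 + v 2 2 4 = 0 := by
    simpa [show ((Finset.Icc 1 3:Finset ℕ).erase 3) = {1,2} from rfl] using hs4 3 (by decide)
  have z114 : v 1 1 4 = 0 := by linarith
  have z224 : v 2 2 4 = 0 := by linarith
  have z334 : v 3 3 4 = 0 := by linarith
  have g12 : v 1 4 2 = 0 := h4 1 (by decide) 2 (by decide) (by decide)
  have g13 : v 1 4 3 = 0 := h4 1 (by decide) 3 (by decide) (by decide)
  have g21 : v 2 4 1 = 0 := h4 2 (by decide) 1 (by decide) (by decide)
  have g23 : v 2 4 3 = 0 := h4 2 (by decide) 3 (by decide) (by decide)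
  have g31 : v 3 4 1 = 0 := h4 3 (by decide) 1 (by decide) (by decide)
  have g32 : v 3 4 2 = 0 := h4 3 (by decide) 2 (by decide) (by decide)
  -- polarization against the six test vectors
  have H1 := hdeg W1 hW1
  have H2 := hdeg W2 hW2
  have H3 := hdeg W3 hW3
  have Hp := hdeg Wp hWp
  have Hq := hdeg Wq hWq
  have Hr := hdeg Wr hWr
  simp only [QPC4_expand] at H1 H2 H3 Hp Hq Hr
  norm_num [W1, Wb] at H1
  norm_num [W2, Wb] at H2
  norm_num [W3, Wb] at H3
  norm_num [Wp, Wb] at Hp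
  norm_num [Wq, Wb] at Hq
  norm_num [Wr, Wb] at Hr
  ring_nf at H1 H2 H3 Hp Hq Hr
  have a1 : v 3 2 1 = - v 3 1 2 := hA 3 (by decide) 2 (by decide) 1 (by decide)
  have a2 : v 1 3 2 = - v 1 2 3 := hA 1 (by decide) 3 (by decide) 2 (by decide)
  have a3 : v 2 3 1 = - v 2 1 3 := hA 2 (by decide) 3 (by decide) 1 (by decide)
  -- zero the six free components
  have z112 : v 1 1 2 = 0 := by linarith
  have z113 : v 1 1 3 = 0 := by linarith
  have z221 : v 2 2 1 = 0 := by linarith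
  have z332 : v 3 3 2 = 0 := by linarith
  have z223 : v 2 2 3 = 0 := by linarith
  have z331 : v 3 3 1 = 0 := by linarith
  have z123 : v 1 2 3 = 0 := by linarith
  have z213 : v 2 1 3 = 0 := by linarith
  have z312 : v 3 1 2 = 0 := by linarith
  intro μ hμ a ha b hb
  have hab := hA μ hμ a ha b hb
  obtain ⟨hm1, hm2⟩ := Finset.mem_Icc.mp hμ
  obtain ⟨ha1, ha2⟩ := Finset.mem_Icc.mp ha
  obtain ⟨hb1, hb2⟩ := Finset.mem_Icc.mp hb
  interval_cases μ <;> interval_cases a <;> interval_cases b <;> linarith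
end

section
/- In the setting of the BV pushforward with $\mathcal{F} = \mathcal{F}_1 \times \mathcal{F}_2$, if $\mathcal{L} \sim \mathcal{L}'$ are two homologous Lagrangian submanifolds of $\mathcal{F}_2$ and $\phi$ is a half-density on $\mathcal{F}$ with $\Delta \phi = 0$, then $\mathcal{P}_{\mathcal{L}} \phi - \mathcal{P}_{\mathcal{L}'} \phi$ is $\Delta_1$-exact. -/
open TensorProduct

/-- Algebraic model of the dependence of the BV pushforward on the Lagrangian:
half-densities on `ℱ = ℱ₁ × ℱ₂` form `H₁ ⊗ H₂`, the total BV Laplacian is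
`Δ = Δ₁ ⊗ 1 + 1 ⊗ Δ₂`, and the BV pushforwards along two homologous Lagrangians
`ℒ ∼ ℒ'` are `𝒫_ℒ = (rid) ∘ (1 ⊗ I)` and `𝒫_{ℒ'} = (rid) ∘ (1 ⊗ I')`, where the BV
integrals `I = ∫_ℒ`, `I' = ∫_{ℒ'}` differ by a Stokes-type term: there is a chain `C`
with `∫_ℒ ψ - ∫_{ℒ'} ψ = ∫_C Δ₂ ψ` for all half-densities `ψ`.  If `Δφ = 0`, then
`𝒫_ℒ φ - 𝒫_{ℒ'} φ` is `Δ₁`-exact. -/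
theorem stmt14 (H1 H2 : Type) [AddCommGroup H1] [Module ℝ H1]
    [AddCommGroup H2] [Module ℝ H2]
    (Δ1 : H1 →ₗ[ℝ] H1) (Δ2 : H2 →ₗ[ℝ] H2)
    (I I' J : H2 →ₗ[ℝ] ℝ)
    (hhom : ∀ ψ : H2, I ψ - I' ψ = J (Δ2 ψ))
    (φ : H1 ⊗[ℝ] H2)
    (hφ : (LinearMap.rTensor H2 Δ1 + LinearMap.lTensor H1 Δ2) φ = 0) :
    ∃ χ : H1,
      ((TensorProduct.rid ℝ H1).toLinearMap.comp (LinearMap.lTensor H1 I)) φ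
        - ((TensorProduct.rid ℝ H1).toLinearMap.comp (LinearMap.lTensor H1 I')) φ
        = Δ1 χ := by
  refine ⟨-(TensorProduct.rid ℝ H1 ((LinearMap.lTensor H1 J) φ)), ?_⟩
  have hneg : LinearMap.lTensor H1 Δ2 φ = - LinearMap.rTensor H2 Δ1 φ := by
    have h := hφ
    rw [LinearMap.add_apply] at h
    rw [add_comm] at h
    exact eq_neg_of_add_eq_zero_left h
  have key :
      (TensorProduct.rid ℝ H1).toLinearMap.comp (LinearMap.lTensor H1 I)
        - (TensorProduct.rid ℝ H1).toLinearMap.comp (LinearMap.lTensor H1 I')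
      = ((TensorProduct.rid ℝ H1).toLinearMap.comp (LinearMap.lTensor H1 J)).comp
          (LinearMap.lTensor H1 Δ2) := by
    apply TensorProduct.ext'
    intro a b
    simp [TensorProduct.smul_tmul', ← hhom b, sub_smul]
  have comm :
      ((TensorProduct.rid ℝ H1).toLinearMap.comp (LinearMap.lTensor H1 J)).comp
          (LinearMap.rTensor H2 Δ1)
      = Δ1.comp ((TensorProduct.rid ℝ H1).toLinearMap.comp (LinearMap.lTensor H1 J)) := by
    apply TensorProduct.ext'
    intro a b
    simp
  simp only [LinearMap.comp_apply]
  have hkey := congrArg (fun f => f φ) key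
  simp only [LinearMap.sub_apply, LinearMap.comp_apply] at hkey
  rw [hkey, hneg, map_neg, map_neg, map_neg]
  have hcomm := congrArg (fun f => f φ) comm
  simp only [LinearMap.comp_apply] at hcomm
  rw [hcomm]
  rfl
end

section
/- Let $Q$ be a vector field on a graded manifold with $[Q, Q] = 0$, and let $\mathcal{B}$ be a submanifold such that $Q$ is tangent to $\mathcal{B}$ along $\mathcal{B}$ up to ideal membership: concretely, in the field-theoretic model where $\mathcal{B} = \{v = 0, \; (d_{\omega_n})^k v = 0 \; \forall k \ge 1 \text{ at the boundary}\}$ and $Q v = L_\xi^\omega v + [c, v] + \xi^n d_{\omega_n} v + d\xi^n \iota_z v$, $Q \omega_n = \iota_\xi F_{\omega_n} + d_{\omega_n} c$, one has: if $v$ and all $(d_{\omega_n})^k v$, $k \ge 1$, vanish at the boundary, then $Q v$ and $Q((d_{\omega_n})^k v)$ for all $k \ge 1$ also vanish at the boundary; hence $\mathcal{B}$ is $Q$-invariant. -/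
/-- Algebraic model of the `Q`-invariance of the good b-condition
`ℬ = {v = 0, (d_{ω_n})^k v = 0 ∀ k ≥ 1 at the boundary}`:  `M` is the module of
fields, `ε : M → M'` the evaluation (restriction) at the boundary, `D = d_{ω_n}` the
covariant derivative transversal to the boundary, and `N = {m : ε(D^k m) = 0 ∀ k ≥ 0}`
the submodule of fields whose transversal jets vanish at the boundary.  The operators
`L = L_ξ^ω`, `C = [c, ·]`, `Z = dξⁿ ι_z` and `ad = [Qω_n, ·]` (with
`Qω_n = ι_ξ F_{ω_n} + d_{ω_n} c`) act tangentially, i.e. they preserve `N`; the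
cohomological vector field satisfies the Leibniz rule `Q(Dm) = ad m + D(Qm)` and
`Qv = L v + C v + ξⁿ D v + Z v`.  If `v` and all `(d_{ω_n})^k v`, `k ≥ 1`, vanish at
the boundary (together with their transversal jets), then so do `Qv` and all
`Q((d_{ω_n})^k v)`; hence `ℬ` is `Q`-invariant. -/
theorem stmt16 (R : Type) [CommRing R] (M M' : Type)
    [AddCommGroup M] [Module R M] [AddCommGroup M'] [Module R M']
    (D Q L C Z ad : M →ₗ[R] M) (ε : M →ₗ[R] M') (ξ : R)
    (hL : ∀ m : M, (∀ k, ε ((⇑D)^[k] m) = 0) → ∀ k, ε ((⇑D)^[k] (L m)) = 0)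
    (hC : ∀ m : M, (∀ k, ε ((⇑D)^[k] m) = 0) → ∀ k, ε ((⇑D)^[k] (C m)) = 0)
    (hZ : ∀ m : M, (∀ k, ε ((⇑D)^[k] m) = 0) → ∀ k, ε ((⇑D)^[k] (Z m)) = 0)
    (had : ∀ m : M, (∀ k, ε ((⇑D)^[k] m) = 0) → ∀ k, ε ((⇑D)^[k] (ad m)) = 0)
    (hLeibniz : ∀ m : M, Q (D m) = ad m + D (Q m))
    (v : M) (hv : ∀ k, ε ((⇑D)^[k] v) = 0)
    (hQv : Q v = L v + C v + ξ • D v + Z v) :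
    ∀ k j, ε ((⇑D)^[j] (Q ((⇑D)^[k] v))) = 0 := by
  have hshift : ∀ (n : ℕ) (m : M), (∀ k, ε ((⇑D)^[k] m) = 0) →
      ∀ k, ε ((⇑D)^[k] ((⇑D)^[n] m)) = 0 := by
    intro n m hm k
    rw [← Function.iterate_add_apply]
    exact hm (k + n)
  have hpow : ∀ (k : ℕ) (m : M), (⇑D)^[k] m = (D ^ k) m := by
    intro k m; rw [Module.End.pow_apply]
  intro k
  induction k with
  | zero =>
    intro j
    simp only [Function.iterate_zero, id_eq, hQv]
    have hDv : ∀ k, ε ((⇑D)^[k] (D v)) = 0 := by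
      intro k; rw [← Function.iterate_succ_apply]; exact hv (k + 1)
    rw [hpow, map_add, map_add, map_add, map_smul, map_add, map_add, map_add, map_smul]
    rw [← hpow, ← hpow, ← hpow, ← hpow]
    rw [hL v hv j, hC v hv j, hZ v hv j, hDv j]
    simp
  | succ n ih =>
    intro j
    rw [Function.iterate_succ_apply', hLeibniz, hpow, map_add, map_add, ← hpow, ← hpow]
    have h1 : ε ((⇑D)^[j] (ad ((⇑D)^[n] v))) = 0 :=
      had _ (hshift n v hv) j
    have h2 : ε ((⇑D)^[j] (D (Q ((⇑D)^[n] v)))) = 0 := by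
      rw [← Function.iterate_succ_apply]
      exact ih (j + 1)
    rw [h1, h2, add_zero]
end

section
/- For $N \geq 4$, consider the quadratic form $Q(v) = \sum v_c^{ce} v_d^{de} - v_d^{ce} v_c^{de}$ (sum over distinct $c, d, e \in \{1, \dots, N-1\}$, Euclidean internal metric) on the space $V$ of arrays $v_\mu^{ab}$ ($1 \le \mu \le N-1$, $1 \le a < b \le N$, $v_\mu^{ab} = -v_\mu^{ba}$) satisfying $v_i^{Nj} = 0$ for $i \neq j$, $\sum_{i \neq j} v_i^{iN} = 0$, and $\sum_{i \neq j} v_i^{ij} = 0$ for each $j$. Then $Q$ decomposes as a direct sum of $\binom{N-1}{3}$ blocks of the $3 \times 3$ matrix $\frac{1}{2}\begin{pmatrix} 0 & -1 & 1 \\ -1 & 0 & -1 \\ 1 & -1 & 0 \end{pmatrix}$ (determinant $\frac{1}{4} \cdot 1 \neq 0$ up to scaling) and $N-1$ blocks of the $(N-3)\times(N-3)$ matrix $-\frac{1}{2}(3 I + w w^T)$ (determinant $(-\frac{3}{2})^{N-3} \frac{N}{3} \neq 0$), and is therefore nondegenerate. -/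
/-- The linear constraints cutting out the space `V` of components `v_μ^{ab}`
(`1 ≤ μ ≤ N-1`, `1 ≤ a, b ≤ N`, antisymmetric in `a, b`) of an element
`v ∈ Ω¹(Σ, ∧²𝒱)` with `e ∧ v = 0`:  `v_i^{Nj} = 0` for `i ≠ j`,
`∑_{i ≠ j} v_i^{iN} = 0` and `∑_{i ≠ j} v_i^{ij} = 0` for each `j ∈ {1,…,N-1}`. -/
def ConstraintsPC (N : ℕ) (v : ℕ → ℕ → ℕ → ℝ) : Prop :=
  (∀ μ ∈ Finset.Icc 1 (N - 1), ∀ a ∈ Finset.Icc 1 N, ∀ b ∈ Finset.Icc 1 N,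
    v μ a b = - v μ b a) ∧
  (∀ i ∈ Finset.Icc 1 (N - 1), ∀ j ∈ Finset.Icc 1 (N - 1), i ≠ j → v i N j = 0) ∧
  (∀ j ∈ Finset.Icc 1 (N - 1), ∑ i ∈ (Finset.Icc 1 (N - 1)).erase j, v i i N = 0) ∧
  (∀ j ∈ Finset.Icc 1 (N - 1), ∑ i ∈ (Finset.Icc 1 (N - 1)).erase j, v i i j = 0)

/-- The quadratic form `Q(v) = ∑ (v_c^{ce} v_d^{de} - v_d^{ce} v_c^{de})` (Euclidean
internal metric), the sum running over distinct `c, d, e ∈ {1, …, N-1}`. -/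
def QPC (N : ℕ) (v : ℕ → ℕ → ℕ → ℝ) : ℝ :=
  ∑ c ∈ Finset.Icc 1 (N - 1), ∑ d ∈ (Finset.Icc 1 (N - 1)).erase c,
    ∑ e ∈ ((Finset.Icc 1 (N - 1)).erase c).erase d,
      (v c c e * v d d e - v d c e * v c d e)

lemma bilinQ (N : ℕ) (v w : ℕ → ℕ → ℕ → ℝ)
    (h : QPC N (fun μ a b => v μ a b + w μ a b) - QPC N v - QPC N w = 0) :
    ∑ c ∈ Finset.Icc 1 (N - 1), ∑ d ∈ (Finset.Icc 1 (N - 1)).erase c,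
      ∑ e ∈ ((Finset.Icc 1 (N - 1)).erase c).erase d,
        (v c c e * w d d e + w c c e * v d d e - v d c e * w c d e - w d c e * v c d e) = 0 := by
  rw [← h]
  simp only [QPC, ← Finset.sum_sub_distrib]
  refine Finset.sum_congr rfl fun c _ => Finset.sum_congr rfl fun d _ =>
    Finset.sum_congr rfl fun e _ => by ring



lemma sum3_point (S : Finset ℕ) (c d e : ℕ) (hc : c ∈ S) (hd : d ∈ S) (he : e ∈ S)
    (hcd : c ≠ d) (hce : c ≠ e) (hde : d ≠ e) (r : ℝ) :
    ∑ C ∈ S, ∑ D ∈ S.erase C, ∑ E ∈ (S.erase C).erase D,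
      (if C = c ∧ D = d ∧ E = e then r else 0) = r := by
  rw [Finset.sum_eq_single_of_mem c hc
    (fun C _ hC => Finset.sum_eq_zero fun D _ => Finset.sum_eq_zero fun E _ => by simp [hC])]
  rw [Finset.sum_eq_single_of_mem d (Finset.mem_erase.mpr ⟨hcd.symm, hd⟩)
    (fun D _ hD => Finset.sum_eq_zero fun E _ => by simp [hD])]
  rw [Finset.sum_eq_single_of_mem e
    (Finset.mem_erase.mpr ⟨hde.symm, Finset.mem_erase.mpr ⟨hce.symm, he⟩⟩)
    (fun E _ hE => by simp [hE])]
  simp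

lemma sum3_pinCE (S : Finset ℕ) (c e : ℕ) (hc : c ∈ S) (he : e ∈ S) (hce : c ≠ e) (f : ℕ → ℝ) :
    ∑ C ∈ S, ∑ D ∈ S.erase C, ∑ E ∈ (S.erase C).erase D,
      (if C = c ∧ E = e then f D else 0) = ∑ D ∈ (S.erase c).erase e, f D := by
  rw [Finset.sum_eq_single_of_mem c hc
    (fun C _ hC => Finset.sum_eq_zero fun D _ => Finset.sum_eq_zero fun E _ => by simp [hC])]
  have key : ∀ D ∈ S.erase c, (∑ E ∈ (S.erase c).erase D, if c = c ∧ E = e then f D else 0)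
      = if D = e then 0 else f D := by
    intro D hD
    simp only [true_and]
    rw [Finset.sum_ite_eq' ((S.erase c).erase D) e (fun _ => f D)]
    rcases eq_or_ne D e with rfl | h
    · simp
    · rw [if_pos (Finset.mem_erase.mpr ⟨Ne.symm h, Finset.mem_erase.mpr ⟨Ne.symm hce, he⟩⟩),
        if_neg h]
  rw [Finset.sum_congr rfl key]
  rw [← Finset.sum_erase (S.erase c) (f := fun D => if D = e then (0:ℝ) else f D) (a := e) (by simp)]
  exact Finset.sum_congr rfl fun x hx => if_neg (Finset.mem_erase.mp hx).1

lemma sum3_pinDE (S : Finset ℕ) (d e : ℕ) (hd : d ∈ S) (he : e ∈ S) (hde : d ≠ e) (f : ℕ → ℝ) :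
    ∑ C ∈ S, ∑ D ∈ S.erase C, ∑ E ∈ (S.erase C).erase D,
      (if D = d ∧ E = e then f C else 0) = ∑ C ∈ (S.erase d).erase e, f C := by
  have key : ∀ C ∈ S,
      (∑ D ∈ S.erase C, ∑ E ∈ (S.erase C).erase D, if D = d ∧ E = e then f C else 0)
      = if C = d ∨ C = e then 0 else f C := by
    intro C hC
    rcases eq_or_ne C d with rfl | hCd
    · rw [if_pos (Or.inl rfl)]
      refine Finset.sum_eq_zero fun D hD => Finset.sum_eq_zero fun E _ => ?_
      simp [(Finset.mem_erase.mp hD).1]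
    rcases eq_or_ne C e with rfl | hCe
    · rw [if_pos (Or.inr rfl)]
      refine Finset.sum_eq_zero fun D hD => Finset.sum_eq_zero fun E hE => ?_
      simp [(Finset.mem_erase.mp (Finset.mem_erase.mp hE).2).1]
    rw [if_neg (by tauto)]
    rw [Finset.sum_eq_single_of_mem d (Finset.mem_erase.mpr ⟨Ne.symm hCd, hd⟩)
      (fun D _ hD => Finset.sum_eq_zero fun E _ => by simp [hD])]
    have : ∀ E ∈ (S.erase C).erase d, (if d = d ∧ E = e then f C else 0)
        = if E = e then f C else 0 := by intro E _; simp
    rw [Finset.sum_congr rfl this,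
      Finset.sum_ite_eq' ((S.erase C).erase d) e (fun _ => f C),
      if_pos (Finset.mem_erase.mpr ⟨Ne.symm hde, Finset.mem_erase.mpr ⟨Ne.symm hCe, he⟩⟩)]
  rw [Finset.sum_congr rfl key]
  rw [← Finset.sum_erase S (f := fun C => if C = d ∨ C = e then (0:ℝ) else f C) (a := d) (by simp)]
  rw [← Finset.sum_erase (S.erase d) (f := fun C => if C = d ∨ C = e then (0:ℝ) else f C) (a := e)
    (by simp)]
  exact Finset.sum_congr rfl fun x hx => by
    have h := Finset.mem_erase.mp hx
    have h2 := Finset.mem_erase.mp h.2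
    rw [if_neg (by tauto)]

lemma wXX (c d e X E : ℕ) (hcd : c ≠ d) (hce : c ≠ e) :
    (if X = c ∧ X = d ∧ E = e then (1:ℝ) else if X = c ∧ X = e ∧ E = d then -1 else 0) = 0 := by
  rw [if_neg (by omega), if_neg (by omega)]

lemma hre_tw (v : ℕ → ℕ → ℕ → ℝ) (c d e C D E : ℕ)
    (hcd : c ≠ d) (hce : c ≠ e) (hde : d ≠ e) :
    v C C E * 0 + 0 * v D D E
    - v D C E * (if C = c ∧ D = d ∧ E = e then (1:ℝ) else if C = c ∧ D = e ∧ E = d then -1 else 0)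
    - (if D = c ∧ C = d ∧ E = e then (1:ℝ) else if D = c ∧ C = e ∧ E = d then -1 else 0) * v C D E
    = (if C = c ∧ D = d ∧ E = e then -v d c e else 0)
      + ((if C = c ∧ D = e ∧ E = d then v e c d else 0)
      + ((if C = d ∧ D = c ∧ E = e then -v d c e else 0)
      + (if C = e ∧ D = c ∧ E = d then v e c d else 0))) := by
  split_ifs <;> first | omega | (simp_all; try ring)

lemma offdiag (N : ℕ) (hN : 4 ≤ N) (v : ℕ → ℕ → ℕ → ℝ)
    (hdeg : ∀ w : ℕ → ℕ → ℕ → ℝ, ConstraintsPC N w →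
      QPC N (fun μ a b => v μ a b + w μ a b) - QPC N v - QPC N w = 0)
    (c d e : ℕ) (hc : c ∈ Finset.Icc 1 (N - 1)) (hd : d ∈ Finset.Icc 1 (N - 1))
    (he : e ∈ Finset.Icc 1 (N - 1)) (hcd : c ≠ d) (hce : c ≠ e) (hde : d ≠ e) :
    v d c e = v e c d := by
  obtain ⟨hc1, hc2⟩ := Finset.mem_Icc.mp hc
  obtain ⟨hd1, hd2⟩ := Finset.mem_Icc.mp hd
  obtain ⟨he1, he2⟩ := Finset.mem_Icc.mp he
  set w : ℕ → ℕ → ℕ → ℝ := fun μ a b =>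
    if μ = c ∧ a = d ∧ b = e then 1 else if μ = c ∧ a = e ∧ b = d then -1 else 0 with hw
  have hwc : ConstraintsPC N w := by
    refine ⟨?_, ?_, ?_, ?_⟩
    · intro μ _ a _ b _
      simp only [hw]
      split_ifs <;> first | omega | norm_num
    · intro i _ j _ _
      simp only [hw]
      rw [if_neg (by omega), if_neg (by omega)]
    · intro j _
      refine Finset.sum_eq_zero fun i _ => ?_
      simp only [hw]
      rw [if_neg (by omega), if_neg (by omega)]
    · intro j _
      refine Finset.sum_eq_zero fun i _ => ?_
      simp only [hw]
      rw [if_neg (by omega), if_neg (by omega)]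
  have hB := bilinQ N v w (hdeg w hwc)
  have hre : ∀ C ∈ Finset.Icc 1 (N - 1), ∀ D ∈ (Finset.Icc 1 (N - 1)).erase C,
      ∀ E ∈ ((Finset.Icc 1 (N - 1)).erase C).erase D,
      v C C E * w D D E + w C C E * v D D E - v D C E * w C D E - w D C E * v C D E
      = (if C = c ∧ D = d ∧ E = e then -v d c e else 0)
        + ((if C = c ∧ D = e ∧ E = d then v e c d else 0)
        + ((if C = d ∧ D = c ∧ E = e then -v d c e else 0)
        + (if C = e ∧ D = c ∧ E = d then v e c d else 0))) := by
    intro C _ D _ E _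
    simp only [hw]
    rw [wXX c d e D E hcd hce, wXX c d e C E hcd hce]
    exact hre_tw v c d e C D E hcd hce hde
  rw [Finset.sum_congr rfl (fun C hC => Finset.sum_congr rfl fun D hD =>
    Finset.sum_congr rfl fun E hE => hre C hC D hD E hE)] at hB
  simp only [Finset.sum_add_distrib] at hB
  rw [sum3_point _ c d e hc hd he hcd hce hde,
    sum3_point _ c e d hc he hd hce hcd (Ne.symm hde),
    sum3_point _ d c e hd hc he (Ne.symm hcd) hde hce,
    sum3_point _ e c d he hc hd (Ne.symm hce) (Ne.symm hde) hcd] at hB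
  linarith

lemma dwXX (c₁ c₂ e X E : ℕ) (h12 : c₁ ≠ c₂) (h1e : c₁ ≠ e) (h2e : c₂ ≠ e) :
    (if X = c₁ ∧ X = c₁ ∧ E = e then (1:ℝ) else if X = c₁ ∧ X = e ∧ E = c₁ then -1
      else if X = c₂ ∧ X = c₂ ∧ E = e then -1 else if X = c₂ ∧ X = e ∧ E = c₂ then 1 else 0)
    = (if X = c₁ ∧ E = e then 1 else 0) + (if X = c₂ ∧ E = e then -1 else 0) := by
  split_ifs <;> first | omega | norm_num

lemma dwCDE0 (c₁ c₂ e C D E : ℕ) (hDC : D ≠ C) (hEC : E ≠ C) :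
    (if C = c₁ ∧ D = c₁ ∧ E = e then (1:ℝ) else if C = c₁ ∧ D = e ∧ E = c₁ then -1
      else if C = c₂ ∧ D = c₂ ∧ E = e then -1 else if C = c₂ ∧ D = e ∧ E = c₂ then 1 else 0)
    = 0 := by
  rw [if_neg (by omega), if_neg (by omega), if_neg (by omega), if_neg (by omega)]

lemma dwDCE0 (c₁ c₂ e C D E : ℕ) (hDC : D ≠ C) (hED : E ≠ D) :
    (if D = c₁ ∧ C = c₁ ∧ E = e then (1:ℝ) else if D = c₁ ∧ C = e ∧ E = c₁ then -1
      else if D = c₂ ∧ C = c₂ ∧ E = e then -1 else if D = c₂ ∧ C = e ∧ E = c₂ then 1 else 0)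
    = 0 := by
  rw [if_neg (by omega), if_neg (by omega), if_neg (by omega), if_neg (by omega)]

lemma hre_dw (v : ℕ → ℕ → ℕ → ℝ) (c₁ c₂ e C D E : ℕ) (h12 : c₁ ≠ c₂) :
    v C C E * ((if D = c₁ ∧ E = e then (1:ℝ) else 0) + (if D = c₂ ∧ E = e then -1 else 0))
    + ((if C = c₁ ∧ E = e then (1:ℝ) else 0) + (if C = c₂ ∧ E = e then -1 else 0)) * v D D E
    - v D C E * 0 - 0 * v C D E
    = (if D = c₁ ∧ E = e then v C C e else 0)
      + ((if D = c₂ ∧ E = e then -v C C e else 0)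
      + ((if C = c₁ ∧ E = e then v D D e else 0)
      + (if C = c₂ ∧ E = e then -v D D e else 0))) := by
  split_ifs <;> first | omega | (simp_all; try ring)

lemma diag_eq (N : ℕ) (hN : 4 ≤ N) (v : ℕ → ℕ → ℕ → ℝ)
    (hdeg : ∀ w : ℕ → ℕ → ℕ → ℝ, ConstraintsPC N w →
      QPC N (fun μ a b => v μ a b + w μ a b) - QPC N v - QPC N w = 0)
    (c₁ c₂ e : ℕ) (h1S : c₁ ∈ Finset.Icc 1 (N - 1)) (h2S : c₂ ∈ Finset.Icc 1 (N - 1))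
    (heS : e ∈ Finset.Icc 1 (N - 1)) (h12 : c₁ ≠ c₂) (h1e : c₁ ≠ e) (h2e : c₂ ≠ e)
    (hsum : ∑ i ∈ (Finset.Icc 1 (N - 1)).erase e, v i i e = 0) :
    v c₁ c₁ e = v c₂ c₂ e := by
  obtain ⟨h11, h12'⟩ := Finset.mem_Icc.mp h1S
  obtain ⟨h21, h22⟩ := Finset.mem_Icc.mp h2S
  obtain ⟨he1, he2⟩ := Finset.mem_Icc.mp heS
  set w : ℕ → ℕ → ℕ → ℝ := fun μ a b =>
    if μ = c₁ ∧ a = c₁ ∧ b = e then 1 else if μ = c₁ ∧ a = e ∧ b = c₁ then -1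
      else if μ = c₂ ∧ a = c₂ ∧ b = e then -1 else if μ = c₂ ∧ a = e ∧ b = c₂ then 1 else 0
    with hw
  have hwc : ConstraintsPC N w := by
    refine ⟨?_, ?_, ?_, ?_⟩
    · intro μ _ a _ b _
      simp only [hw]
      split_ifs <;> first | omega | norm_num
    · intro i _ j hj _
      obtain ⟨hj1, hj2⟩ := Finset.mem_Icc.mp hj
      simp only [hw]
      rw [if_neg (by omega), if_neg (by omega), if_neg (by omega), if_neg (by omega)]
    · intro j _
      refine Finset.sum_eq_zero fun i _ => ?_
      simp only [hw]
      rw [if_neg (by omega), if_neg (by omega), if_neg (by omega), if_neg (by omega)]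
    · intro j hj
      by_cases hje : j = e
      · have step : ∀ i ∈ (Finset.Icc 1 (N - 1)).erase j,
            w i i j = (if i = c₁ then (1:ℝ) else 0) + (if i = c₂ then -1 else 0) := by
          intro i _
          simp only [hw]
          split_ifs <;> first | omega | norm_num
        rw [Finset.sum_congr rfl step, Finset.sum_add_distrib,
          Finset.sum_ite_eq' ((Finset.Icc 1 (N - 1)).erase j) c₁ (fun _ => (1:ℝ)),
          Finset.sum_ite_eq' ((Finset.Icc 1 (N - 1)).erase j) c₂ (fun _ => (-1:ℝ)),
          if_pos (Finset.mem_erase.mpr ⟨by omega, h1S⟩),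
          if_pos (Finset.mem_erase.mpr ⟨by omega, h2S⟩)]
        norm_num
      · refine Finset.sum_eq_zero fun i _ => ?_
        simp only [hw]
        rw [if_neg (by omega), if_neg (by omega), if_neg (by omega), if_neg (by omega)]
  have hB := bilinQ N v w (hdeg w hwc)
  have hre : ∀ C ∈ Finset.Icc 1 (N - 1), ∀ D ∈ (Finset.Icc 1 (N - 1)).erase C,
      ∀ E ∈ ((Finset.Icc 1 (N - 1)).erase C).erase D,
      v C C E * w D D E + w C C E * v D D E - v D C E * w C D E - w D C E * v C D E
      = (if D = c₁ ∧ E = e then v C C e else 0)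
        + ((if D = c₂ ∧ E = e then -v C C e else 0)
        + ((if C = c₁ ∧ E = e then v D D e else 0)
        + (if C = c₂ ∧ E = e then -v D D e else 0))) := by
    intro C _ D hD E hE
    have hDC : D ≠ C := (Finset.mem_erase.mp hD).1
    have hED : E ≠ D := (Finset.mem_erase.mp hE).1
    have hEC : E ≠ C := (Finset.mem_erase.mp (Finset.mem_erase.mp hE).2).1
    simp only [hw]
    rw [dwXX c₁ c₂ e D E h12 h1e h2e, dwXX c₁ c₂ e C E h12 h1e h2e,
      dwCDE0 c₁ c₂ e C D E hDC hEC, dwDCE0 c₁ c₂ e C D E hDC hED]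
    exact hre_dw v c₁ c₂ e C D E h12
  rw [Finset.sum_congr rfl (fun C hC => Finset.sum_congr rfl fun D hD =>
    Finset.sum_congr rfl fun E hE => hre C hC D hD E hE)] at hB
  simp only [Finset.sum_add_distrib] at hB
  have P1 := sum3_pinDE (Finset.Icc 1 (N - 1)) c₁ e h1S heS h1e (fun C => v C C e)
  have P2 := sum3_pinDE (Finset.Icc 1 (N - 1)) c₂ e h2S heS h2e (fun C => -v C C e)
  have P3 := sum3_pinCE (Finset.Icc 1 (N - 1)) c₁ e h1S heS h1e (fun D => v D D e)
  have P4 := sum3_pinCE (Finset.Icc 1 (N - 1)) c₂ e h2S heS h2e (fun D => -v D D e)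
  simp only [P1, P2, P3, P4] at hB
  have hA : ∀ c', c' ∈ Finset.Icc 1 (N - 1) → c' ≠ e →
      ∑ x ∈ ((Finset.Icc 1 (N - 1)).erase c').erase e, v x x e = - v c' c' e := by
    intro c' hc' hne
    rw [Finset.erase_right_comm]
    have h2 := Finset.add_sum_erase ((Finset.Icc 1 (N - 1)).erase e) (fun i => v i i e)
      (Finset.mem_erase.mpr ⟨hne, hc'⟩)
    linarith [h2, hsum]
  simp only [Finset.sum_neg_distrib] at hB
  rw [hA c₁ h1S h1e, hA c₂ h2S h2e] at hB
  linarith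

/-- For `N ≥ 4`, the quadratic form `QPC N` — which decomposes into `(N-1 choose 3)`
blocks `½ [[0,-1,1],[-1,0,-1],[1,-1,0]]` on the components `(v_c^{de}, v_d^{ce},
v_e^{cd})` and `N-1` blocks `-½ (3·I + wwᵀ)` on the components `v_c^{ce}`, all with
nonzero determinant — is nondegenerate on the constraint space: if `v` satisfies the
constraints and its polarization against every constrained `w` vanishes, then all
components of `v` (in the index ranges) vanish. -/
theorem stmt18 (N : ℕ) (hN : 4 ≤ N) (v : ℕ → ℕ → ℕ → ℝ) (hv : ConstraintsPC N v)
    (hdeg : ∀ w : ℕ → ℕ → ℕ → ℝ, ConstraintsPC N w →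
      QPC N (fun μ a b => v μ a b + w μ a b) - QPC N v - QPC N w = 0) :
    ∀ μ ∈ Finset.Icc 1 (N - 1), ∀ a ∈ Finset.Icc 1 N, ∀ b ∈ Finset.Icc 1 N,
      v μ a b = 0 := by
  obtain ⟨hanti, hvN, hv3, hv4⟩ := hv
  have hNmem : N ∈ Finset.Icc 1 N := Finset.mem_Icc.mpr ⟨by omega, le_refl N⟩
  have cardS : (Finset.Icc 1 (N - 1)).card = N - 1 := by rw [Nat.card_Icc]; omega
  have hdiagN : ∀ i ∈ Finset.Icc 1 (N - 1), v i i N = 0 := by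
    have hTj : ∀ j ∈ Finset.Icc 1 (N - 1),
        v j j N = ∑ i ∈ Finset.Icc 1 (N - 1), v i i N := by
      intro j hj
      have h2 := Finset.add_sum_erase (Finset.Icc 1 (N - 1)) (fun i => v i i N) hj
      have h0 := hv3 j hj
      linarith
    intro i hi
    have h0 := hv3 i hi
    rw [Finset.sum_congr rfl (fun j hj => hTj j (Finset.mem_of_mem_erase hj)),
      Finset.sum_const, nsmul_eq_mul, Finset.card_erase_of_mem hi, cardS] at h0
    have hT : ∑ i ∈ Finset.Icc 1 (N - 1), v i i N = 0 :=
      (mul_eq_zero.mp h0).resolve_left (Nat.cast_ne_zero.mpr (by omega))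
    rw [hTj i hi, hT]
  have hdiag : ∀ e ∈ Finset.Icc 1 (N - 1), ∀ c ∈ Finset.Icc 1 (N - 1), c ≠ e →
      v c c e = 0 := by
    intro e he c hc hce
    have hsum := hv4 e he
    have hall : ∀ i ∈ (Finset.Icc 1 (N - 1)).erase e, v i i e = v c c e := by
      intro i hi
      obtain ⟨hie, hiS⟩ := Finset.mem_erase.mp hi
      rcases eq_or_ne i c with rfl | hic
      · rfl
      · exact diag_eq N hN v hdeg i c e hiS hc he hic hie hce (hv4 e he)
    rw [Finset.sum_congr rfl hall, Finset.sum_const, nsmul_eq_mul,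
      Finset.card_erase_of_mem he, cardS] at hsum
    exact (mul_eq_zero.mp hsum).resolve_left (Nat.cast_ne_zero.mpr (by omega))
  have S2N : ∀ x, x ∈ Finset.Icc 1 (N - 1) → x ∈ Finset.Icc 1 N := by
    intro x hx
    rw [Finset.mem_Icc] at *
    omega
  have hoff : ∀ m ∈ Finset.Icc 1 (N - 1), ∀ a ∈ Finset.Icc 1 (N - 1),
      ∀ b ∈ Finset.Icc 1 (N - 1), m ≠ a → m ≠ b → a ≠ b → v m a b = 0 := by
    intro m hm a ha b hb hma hmb hab
    have h1 := offdiag N hN v hdeg a m b ha hm hb (Ne.symm hma) hab hmb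
    have h2 := offdiag N hN v hdeg m a b hm ha hb hma hmb hab
    have h3 := offdiag N hN v hdeg b a m hb ha hm (Ne.symm hab) (Ne.symm hmb) (Ne.symm hma)
    have a1 := hanti m hm a (S2N a ha) b (S2N b hb)
    have a2 := hanti a ha m (S2N m hm) b (S2N b hb)
    have a3 := hanti b hb a (S2N a ha) m (S2N m hm)
    linarith
  intro μ hμ a ha b hb
  obtain ⟨hμ1, hμ2⟩ := Finset.mem_Icc.mp hμ
  obtain ⟨ha1, ha2⟩ := Finset.mem_Icc.mp ha
  obtain ⟨hb1, hb2⟩ := Finset.mem_Icc.mp hb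
  by_cases hab : a = b
  · subst a
    have := hanti μ hμ b hb b hb
    linarith
  by_cases hbN : b = N
  · subst b
    have haS : a ∈ Finset.Icc 1 (N - 1) := Finset.mem_Icc.mpr ⟨ha1, by omega⟩
    by_cases hma : μ = a
    · subst μ
      exact hdiagN a haS
    · have h1 := hanti μ hμ a ha N hNmem
      rw [hvN μ hμ a haS hma] at h1
      simpa using h1
  by_cases haN : a = N
  · subst a
    have hbS : b ∈ Finset.Icc 1 (N - 1) := Finset.mem_Icc.mpr ⟨hb1, by omega⟩
    by_cases hmb : μ = b
    · subst μ
      have h1 := hanti b hμ N ha b hb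
      rw [hdiagN b hbS] at h1
      simpa using h1
    · exact hvN μ hμ b hbS hmb
  have haS : a ∈ Finset.Icc 1 (N - 1) := Finset.mem_Icc.mpr ⟨ha1, by omega⟩
  have hbS : b ∈ Finset.Icc 1 (N - 1) := Finset.mem_Icc.mpr ⟨hb1, by omega⟩
  by_cases hma : μ = a
  · subst μ
    exact hdiag b hbS a haS hab
  by_cases hmb : μ = b
  · subst μ
    have h1 := hanti b hμ a ha b hb
    rw [hdiag a haS b hbS (Ne.symm hab)] at h1
    simpa using h1
  · exact hoff μ hμ a haS b hbS hma hmb hab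
end
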